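/- For every real μ > 0 and every real x ≥ 0, the pointwise inequality e^{−x} − e^{−μ} + (x − μ)e^{−μ} ≤ ((1 − e^{−μ} − μe^{−μ})/μ²)·(x − μ)² holds. -/

import Mathlib

/-!
Put `u = x - μ`. Factoring out `e^{-μ}`, the claim becomes `μ² g(-u) ≤ u² g(μ)` with
`g(t) = e^t - 1 - t`, i.e. the monotonicity of `g(t) / t²` on `t ≤ μ`. For `0 ≤ t ≤ μ` this is
termwise comparison of the power series `g(t) = ∑_{n ≥ 2} tⁿ / n!`; for `t ≤ 0` it follows from
`g(t) ≤ t² / 2 ≤ t² g(μ) / μ²`.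
-/

open Real Nat

lemma hasSum_exp_sub_one_sub (x : ℝ) :
    HasSum (fun n : ℕ ↦ x ^ (n + 2) / (n + 2)!) (exp x - 1 - x) := by
  have h := (hasSum_nat_add_iff' 2).2 (NormedSpace.expSeries_div_hasSum_exp x)
  simpa [← exp_eq_exp_ℝ, Finset.sum_range_succ, sub_sub] using h

/-- Since `(1 - t + t²/2)(1 + t + t²/2) = 1 + t⁴/4 ≥ 1`, this follows from
`Real.quadratic_le_exp_of_nonneg`. -/
lemma exp_neg_le_quadratic_of_nonneg {t : ℝ} (ht : 0 ≤ t) : exp (-t) ≤ 1 - t + t ^ 2 / 2 := by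
  have hquad := quadratic_le_exp_of_nonneg ht
  rw [exp_neg, inv_le_iff_one_le_mul₀ (exp_pos t)]
  nlinarith [sq_nonneg (t ^ 2), sq_nonneg (t - 1)]

lemma sq_mul_exp_sub_one_sub_le_of_nonneg {s μ : ℝ} (hs : 0 ≤ s) (hsμ : s ≤ μ) :
    μ ^ 2 * (exp s - 1 - s) ≤ s ^ 2 * (exp μ - 1 - μ) := by
  refine hasSum_le (fun n ↦ ?_) ((hasSum_exp_sub_one_sub s).mul_left _)
    ((hasSum_exp_sub_one_sub μ).mul_left _)
  have hpow : μ ^ 2 * s ^ (n + 2) ≤ s ^ 2 * μ ^ (n + 2) := by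
    calc μ ^ 2 * s ^ (n + 2) = s ^ 2 * μ ^ 2 * s ^ n := by ring
      _ ≤ s ^ 2 * μ ^ 2 * μ ^ n := by gcongr
      _ = s ^ 2 * μ ^ (n + 2) := by ring
  simp only [mul_div_assoc']
  gcongr

lemma sq_mul_exp_sub_one_sub_le {s μ : ℝ} (hμ : 0 ≤ μ) (hsμ : s ≤ μ) :
    μ ^ 2 * (exp s - 1 - s) ≤ s ^ 2 * (exp μ - 1 - μ) := by
  rcases le_total 0 s with hs | hs
  · exact sq_mul_exp_sub_one_sub_le_of_nonneg hs hsμ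
  have hs_upper : exp s - 1 - s ≤ s ^ 2 / 2 := by
    simpa using (exp_neg_le_quadratic_of_nonneg (neg_nonneg.2 hs)).trans_eq (by ring)
  have hμ_lower : μ ^ 2 / 2 ≤ exp μ - 1 - μ := by linarith [quadratic_le_exp_of_nonneg hμ]
  calc μ ^ 2 * (exp s - 1 - s) ≤ μ ^ 2 * (s ^ 2 / 2) := by gcongr
    _ = s ^ 2 * (μ ^ 2 / 2) := by ring
    _ ≤ s ^ 2 * (exp μ - 1 - μ) := by gcongr

/-- pointwise convexity-defect bound. -/
theorem stmt_4 (μ : ℝ) (hμ : 0 < μ) (x : ℝ) (hx : 0 ≤ x) :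
    Real.exp (-x) - Real.exp (-μ) + (x - μ) * Real.exp (-μ) ≤
      ((1 - Real.exp (-μ) - μ * Real.exp (-μ)) / μ^2) * (x - μ)^2 := by
  have hscaled := mul_le_mul_of_nonneg_left
    (sq_mul_exp_sub_one_sub_le (s := μ - x) hμ.le (by linarith)) (exp_pos (-μ)).le
  have hexp_x : exp (-μ) * exp (μ - x) = exp (-x) := by rw [← exp_add]; ring_nf
  have hexp_μ : exp (-μ) * exp μ = 1 := by rw [← exp_add, neg_add_cancel, exp_zero]
  rw [div_mul_eq_mul_div, le_div_iff₀ (by positivity)]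
  linear_combination hscaled - μ ^ 2 * hexp_x + (x - μ) ^ 2 * hexp_μ
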